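/- arXiv:2602.11373 — 2 statements merged into one kernel-verified Lean document; each statement's English description precedes it below -/
import Mathlib

section
/- Let τ_M > 0, τ_T > 0, a_M, a_T ∈ ℝ, t_f ∈ ℝ, and suppose Z : ℝ → ℝ satisfies Z′(s) = −τ_M·Ψ((t_f−s)/τ_M)·a_M + τ_T·Ψ((t_f−s)/τ_T)·a_T for all s in an interval I (both players apply the constant commands u_M = a_M, u_T = a_T). Then the function s ↦ Z(s) − ∂Z*(t_f − s) has zero derivative on I, hence is constant on I; in particular, if t_f ∈ I then Z(t_f) = Z(t) − ∂Z*(t_f − t) for every t ∈ I, so the equicost curves Z = c + ∂Z*(t_go) are invariant trajectories of the ZEM dynamics under saturated play. -/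
/-- Ψ(θ) = exp(−θ) + θ − 1 -/
noncomputable def Psi (θ : ℝ) : ℝ := Real.exp (-θ) + θ - 1

/-- Υ(θ) = θ²/2 − exp(−θ) − θ + 1 -/
noncomputable def Upsilon (θ : ℝ) : ℝ := θ ^ 2 / 2 - Real.exp (-θ) - θ + 1

/-- The singular-region boundary ∂Z*(s) = a_M·τ_M²·Υ(s/τ_M) − a_T·τ_T²·Υ(s/τ_T). -/
noncomputable def singBdry (aM aT τM τT s : ℝ) : ℝ :=
  aM * τM ^ 2 * Upsilon (s / τM) - aT * τT ^ 2 * Upsilon (s / τT)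

/-!
Since Υ' = Ψ, the chain rule gives
(d/ds) ∂Z*(t_f − s) = −a_M τ_M Ψ((t_f−s)/τ_M) + a_T τ_T Ψ((t_f−s)/τ_T),
which is exactly the ZEM velocity under saturated play. Hence Z(s) − ∂Z*(t_f − s) has zero
derivative on the interval I and is constant there by the mean value inequality; at s = t_f the
boundary term vanishes because Υ(0) = 0.
-/

lemma Convex.eq_of_forall_hasDerivAt_zero {E : Type*} [NormedAddCommGroup E] [NormedSpace ℝ E]
    {s : Set ℝ} (hs : Convex ℝ s) {f : ℝ → E} (hf : ∀ x ∈ s, HasDerivAt f 0 x)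
    {x y : ℝ} (hx : x ∈ s) (hy : y ∈ s) : f x = f y := by
  have h := hs.norm_image_sub_le_of_norm_hasDerivWithin_le
    (fun z hz => (hf z hz).hasDerivWithinAt) (fun _ _ => norm_zero.le) hx hy
  rw [zero_mul, norm_le_zero_iff, sub_eq_zero] at h
  exact h.symm

lemma hasDerivAt_Upsilon (θ : ℝ) : HasDerivAt Upsilon (Psi θ) θ := by
  have hexp : HasDerivAt (fun θ : ℝ => Real.exp (-θ)) (Real.exp (-θ) * -1) θ :=
    (hasDerivAt_neg θ).exp
  have hsq : HasDerivAt (fun θ : ℝ => θ ^ 2 / 2) θ θ := by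
    simpa using (hasDerivAt_pow 2 θ).div_const 2
  exact (((hsq.sub hexp).sub (hasDerivAt_id θ)).add_const 1).congr_deriv (by rw [Psi]; ring)

lemma Upsilon_zero : Upsilon 0 = 0 := by
  simp [Upsilon]

/-- For `τ = 0` both sides vanish, since `s / 0 = 0`. -/
lemma hasDerivAt_sq_mul_Upsilon_div (τ s : ℝ) :
    HasDerivAt (fun s => τ ^ 2 * Upsilon (s / τ)) (τ * Psi (s / τ)) s := by
  rcases eq_or_ne τ 0 with rfl | hτ
  · simpa using hasDerivAt_const s (0 : ℝ)
  · exact (((hasDerivAt_Upsilon (s / τ)).comp s ((hasDerivAt_id s).div_const τ)).const_mul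
      (τ ^ 2)).congr_deriv (by field_simp)

lemma hasDerivAt_singBdry (aM aT τM τT s : ℝ) :
    HasDerivAt (singBdry aM aT τM τT)
      (aM * τM * Psi (s / τM) - aT * τT * Psi (s / τT)) s := by
  have h := ((hasDerivAt_sq_mul_Upsilon_div τM s).const_mul aM).sub
    ((hasDerivAt_sq_mul_Upsilon_div τT s).const_mul aT)
  simp only [← mul_assoc] at h
  exact h

lemma singBdry_zero (aM aT τM τT : ℝ) : singBdry aM aT τM τT 0 = 0 := by
  simp [singBdry, Upsilon_zero]

theorem equicost_curves_invariant_general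
    (τM τT aM aT tf : ℝ)
    (I : Set ℝ) (hI : Convex ℝ I) (Z : ℝ → ℝ)
    (hZ : ∀ s ∈ I,
      HasDerivAt Z (-τM * Psi ((tf - s) / τM) * aM + τT * Psi ((tf - s) / τT) * aT) s) :
    (∀ s ∈ I, HasDerivAt (fun s => Z s - singBdry aM aT τM τT (tf - s)) 0 s) ∧
    (∀ s ∈ I, ∀ t ∈ I,
      Z s - singBdry aM aT τM τT (tf - s) = Z t - singBdry aM aT τM τT (tf - t)) ∧
    (tf ∈ I → ∀ t ∈ I, Z tf = Z t - singBdry aM aT τM τT (tf - t)) := by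
  have hderiv : ∀ s ∈ I, HasDerivAt (fun s => Z s - singBdry aM aT τM τT (tf - s)) 0 s :=
    fun s hs => ((hZ s hs).sub
      ((hasDerivAt_singBdry aM aT τM τT (tf - s)).comp_const_sub tf s)).congr_deriv (by ring)
  have hconst (s : ℝ) (hs : s ∈ I) (t : ℝ) (ht : t ∈ I) :=
    hI.eq_of_forall_hasDerivAt_zero hderiv hs ht
  refine ⟨hderiv, hconst, fun htf t ht => ?_⟩
  simpa [singBdry_zero] using hconst tf htf t ht

/-- Under saturated (constant) play u_M = a_M, u_T = a_T, the map
s ↦ Z(s) − ∂Z*(t_f − s) has zero derivative on the interval I, hence is constant on I;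
if t_f ∈ I then Z(t_f) = Z(t) − ∂Z*(t_f − t) for all t ∈ I: the equicost curves
Z = c + ∂Z*(t_go) are invariant trajectories of the ZEM dynamics. -/
theorem equicost_curves_invariant
    (τM τT aM aT tf : ℝ) (hτM : 0 < τM) (hτT : 0 < τT)
    (I : Set ℝ) (hI : Convex ℝ I) (Z : ℝ → ℝ)
    (hZ : ∀ s ∈ I,
      HasDerivAt Z (-τM * Psi ((tf - s) / τM) * aM + τT * Psi ((tf - s) / τT) * aT) s) :
    (∀ s ∈ I, HasDerivAt (fun s => Z s - singBdry aM aT τM τT (tf - s)) 0 s) ∧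
    (∀ s ∈ I, ∀ t ∈ I,
      Z s - singBdry aM aT τM τT (tf - s) = Z t - singBdry aM aT τM τT (tf - t)) ∧
    (tf ∈ I → ∀ t ∈ I, Z tf = Z t - singBdry aM aT τM τT (tf - t)) :=
  equicost_curves_invariant_general τM τT aM aT tf I hI Z hZ
end

section
/- Fix τ_M > 0, τ_T > 0, a_M, a_T ∈ ℝ, t_go ≥ 0 and 0 ≤ τ ≤ t_go. Let u_T ∈ ℝ be a constant with u_T ≤ a_T, and let Z ∈ ℝ satisfy Z ≤ ∂Z*(t_go). Define the propagated ZEM under the maximal pursuer command u_M = a_M by Z⁺ = Z − a_M·τ_M²·[Υ(t_go/τ_M) − Υ((t_go−τ)/τ_M)] + u_T·τ_T²·[Υ(t_go/τ_T) − Υ((t_go−τ)/τ_T)]. Then Z⁺ ≤ ∂Z*(t_go − τ); that is, a state at or below the upper boundary of the singular region cannot cross that boundary when the pursuer applies u_M = a_M, so the only way to exit the singular region under u_M = a_M is through its lower boundary. -/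
lemma upsilon_mono : Monotone Upsilon := by
  have h : ∀ θ : ℝ, HasDerivAt Upsilon (θ + Real.exp (-θ) * (-1) * (-1) - 1) θ := by
    intro θ
    unfold Upsilon
    have h1 : HasDerivAt (fun θ : ℝ => θ ^ 2 / 2) θ θ := by
      simpa using ((hasDerivAt_pow 2 θ).div_const 2)
    have h2 : HasDerivAt (fun θ : ℝ => Real.exp (-θ)) (Real.exp (-θ) * (-1)) θ :=
      (Real.hasDerivAt_exp (-θ)).comp θ (hasDerivAt_neg θ)
    simpa using ((h1.sub h2).sub (hasDerivAt_id θ)).add_const 1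
  apply monotone_of_deriv_nonneg
  · exact Differentiable.add (Differentiable.sub (Differentiable.sub
      (by fun_prop) (by fun_prop)) (by fun_prop)) (by fun_prop)
  · intro θ
    rw [(h θ).deriv]
    have := Real.add_one_le_exp (-θ)
    nlinarith

/-- A state at or below the upper boundary of the singular region cannot cross that
boundary when the pursuer applies u_M = a_M: if Z ≤ ∂Z*(t_go) and u_T ≤ a_T, then the
ZEM propagated ahead by a horizon 0 ≤ τ ≤ t_go under u_M = a_M satisfies
Z⁺ ≤ ∂Z*(t_go − τ). -/
theorem no_upper_crossing_under_max_pursuer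
    (τM τT aM aT tgo τ uT Z : ℝ) (hτM : 0 < τM) (hτT : 0 < τT)
    (htgo : 0 ≤ tgo) (hτ0 : 0 ≤ τ) (hττ : τ ≤ tgo)
    (huT : uT ≤ aT) (hZ : Z ≤ singBdry aM aT τM τT tgo) :
    Z - aM * τM ^ 2 * (Upsilon (tgo / τM) - Upsilon ((tgo - τ) / τM))
      + uT * τT ^ 2 * (Upsilon (tgo / τT) - Upsilon ((tgo - τ) / τT))
      ≤ singBdry aM aT τM τT (tgo - τ) := by
  have hmono : Upsilon ((tgo - τ) / τT) ≤ Upsilon (tgo / τT) :=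
    upsilon_mono (by apply div_le_div_of_nonneg_right (by linarith) hτT.le)
  unfold singBdry at *
  nlinarith [mul_nonneg (mul_nonneg (sub_nonneg.2 huT) (sq_nonneg τT)) (sub_nonneg.2 hmono)]
end
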